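/- arXiv:1307.3496 — 2 statements merged into one kernel-verified Lean document; each statement's English description precedes it below -/
import Mathlib

section
/- Let j : ℝ → ℝ be locally Lipschitz and suppose its Clarke subdifferential ∂j satisfies the dissipativity condition: there exist d₁ ∈ ℝ and d₂ > 0 such that inf{ξu : ξ ∈ ∂j(u)} ≥ d₁ - d₂|u|² for all u ∈ ℝ. Let jₙ be the mollification of j by ϱₙ(s) = nϱ(ns) for a standard nonnegative mollifier ϱ supported in (-1,1). Then for every ε > 0 there exist N₀ ∈ ℕ and d₁' ∈ ℝ such that for all n ≥ N₀, jₙ'(u)·u ≥ d₁' - (d₂+ε)|u|² for all u ∈ ℝ. -/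
open MeasureTheory Filter Set

/-- The Clarke generalized directional derivative of `j` at `u` in direction `v`. -/
noncomputable def clarkeDirDeriv (j : ℝ → ℝ) (u v : ℝ) : ℝ :=
  Filter.limsup (fun p : ℝ × ℝ => (j (p.1 + p.2 * v) - j p.1) / p.2)
    ((nhds u) ×ˢ (nhdsWithin 0 (Set.Ioi 0)))

/-- The Clarke subdifferential of `j` at `u`. -/
noncomputable def clarkeSubdiff (j : ℝ → ℝ) (u : ℝ) : Set ℝ :=
  {ξ : ℝ | ∀ v : ℝ, ξ * v ≤ clarkeDirDeriv j u v}


open Metric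


lemma my_compact_lip {f : ℝ → ℝ} (hf : LocallyLipschitz f) {s : Set ℝ} (hs : IsCompact s) :
    ∃ K : NNReal, LipschitzOnWith K f s := by
  rcases s.eq_empty_or_nonempty with rfl | hne
  · exact ⟨0, by simp⟩
  have H : ∀ x : ℝ, ∃ (K : NNReal) (r : ℝ), 0 < r ∧ LipschitzOnWith K f (Metric.ball x (2*r)) := by
    intro x
    obtain ⟨K, t, ht, hlip⟩ := hf x
    obtain ⟨ε, hε, hball⟩ := Metric.mem_nhds_iff.1 ht
    refine ⟨K, ε/2, by linarith, hlip.mono ?_⟩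
    rw [show 2*(ε/2) = ε by ring]; exact hball
  choose K r hr hlip using H
  obtain ⟨T, hTs, hcov⟩ := hs.elim_nhds_subcover (fun x => Metric.ball x (r x))
    (fun x _ => Metric.ball_mem_nhds x (hr x))
  have hTne : T.Nonempty := by
    obtain ⟨x, hx⟩ := hne
    rcases Set.mem_iUnion₂.1 (hcov hx) with ⟨z, hz, _⟩
    exact ⟨z, hz⟩
  set η := T.inf' hTne r with hηdef
  have hη : 0 < η := (Finset.lt_inf'_iff hTne).2 fun b _ => hr b
  set K' := T.sup' hTne K with hK'def
  obtain ⟨M, hM⟩ := hs.exists_bound_of_continuousOn hf.continuous.continuousOn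
  have hM0 : 0 ≤ M := le_trans (norm_nonneg _) (hM _ hne.some_mem)
  refine ⟨K' + Real.toNNReal (2*M/η), ?_⟩
  rw [lipschitzOnWith_iff_dist_le_mul]
  intro x hx y hy
  have hcoe : ((K' + Real.toNNReal (2*M/η) : NNReal) : ℝ) = (K' : ℝ) + 2*M/η := by
    push_cast [Real.coe_toNNReal _ (by positivity : (0:ℝ) ≤ 2*M/η)]
    ring
  rcases lt_or_ge (dist x y) η with hd | hd
  · rcases Set.mem_iUnion₂.1 (hcov hx) with ⟨z, hzT, hxz⟩
    have hηz : η ≤ r z := Finset.inf'_le _ hzT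
    have hxz2 : x ∈ Metric.ball z (2 * r z) := by
      rw [Metric.mem_ball] at hxz ⊢; linarith
    have hyz2 : y ∈ Metric.ball z (2 * r z) := by
      rw [Metric.mem_ball] at hxz ⊢
      have := dist_triangle y x z
      rw [dist_comm y x] at this
      linarith
    have := (hlip z).dist_le_mul x hxz2 y hyz2
    have hKz : (K z : ℝ) ≤ (K' : ℝ) := by
      exact_mod_cast Finset.le_sup' K hzT
    rw [hcoe]
    have h2 : 0 ≤ 2*M/η * dist x y := by positivity
    nlinarith [dist_nonneg (x := x) (y := y)]
  · have h1 : dist (f x) (f y) ≤ 2 * M := by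
      have := dist_le_norm_add_norm (f x) (f y)
      have := hM x hx
      have := hM y hy
      linarith
    rw [hcoe]
    have h2 : 2*M ≤ 2*M/η * dist x y := by
      rw [div_mul_eq_mul_div, le_div_iff₀ hη]
      nlinarith
    nlinarith [dist_nonneg (x := x) (y := y), K'.coe_nonneg]


lemma my_ae_diff {j : ℝ → ℝ} (hj : LocallyLipschitz j) :
    ∀ᵐ x : ℝ, DifferentiableAt ℝ j x := by
  have key : ∀ m : ℤ, ∀ᵐ x : ℝ, x ∈ Set.Ioo ((m:ℝ)-1) (m+2) → DifferentiableAt ℝ j x := by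
    intro m
    obtain ⟨K, hK⟩ := my_compact_lip hj (isCompact_Icc (a := (m:ℝ)-1) (b := (m:ℝ)+2))
    obtain ⟨g, hg, hfg⟩ := hK.extend_real
    filter_upwards [hg.ae_differentiableAt_real] with x hx hmem
    have hev : j =ᶠ[nhds x] g := by
      filter_upwards [isOpen_Ioo.mem_nhds hmem] with y hy
      exact hfg (Set.Ioo_subset_Icc_self hy)
    exact (Filter.EventuallyEq.differentiableAt_iff hev).2 hx
  filter_upwards [ae_all_iff.2 key] with x hx
  refine hx ⌊x⌋ ⟨by linarith [Int.floor_le x], by linarith [Int.lt_floor_add_one x]⟩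

lemma my_deriv_bound {j : ℝ → ℝ} {K : NNReal} {a b : ℝ}
    (hK : LipschitzOnWith K j (Set.Icc a b)) {x : ℝ} (hx : x ∈ Set.Icc a b)
    {ρ : ℝ} (hρ : 0 < ρ) (hball : Metric.ball x ρ ⊆ Set.Icc a b)
    (hdiff : DifferentiableAt ℝ j x) : |deriv j x| ≤ K := by
  have ht : Tendsto (fun y => |slope j x y|) (nhdsWithin x {x}ᶜ) (nhds |deriv j x|) :=
    (continuous_abs.tendsto _).comp (hasDerivAt_iff_tendsto_slope.1 hdiff.hasDerivAt)
  refine le_of_tendsto ht ?_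
  have hmem : Metric.ball x ρ ∈ nhdsWithin x {x}ᶜ :=
    nhdsWithin_le_nhds (Metric.ball_mem_nhds _ hρ)
  filter_upwards [hmem, self_mem_nhdsWithin] with y hy hyne
  have hyx : y ≠ x := hyne
  have := hK.dist_le_mul y (hball hy) x hx
  rw [slope_def_field, div_eq_mul_inv, abs_mul, abs_inv]
  rw [Real.dist_eq, Real.dist_eq] at this
  have hpos : 0 < |y - x| := abs_pos.2 (sub_ne_zero.2 hyx)
  rw [mul_inv_le_iff₀ hpos]
  exact this


lemma my_deriv_mem {j : ℝ → ℝ} (hj : LocallyLipschitz j) {x : ℝ}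
    (hx : DifferentiableAt ℝ j x) : deriv j x ∈ clarkeSubdiff j x := by
  intro v
  set g : ℝ × ℝ → ℝ := fun p => (j (p.1 + p.2 * v) - j p.1) / p.2 with hg
  set F : Filter (ℝ × ℝ) := (nhds x) ×ˢ (nhdsWithin 0 (Set.Ioi 0)) with hF
  have hbdd : Filter.IsBoundedUnder (· ≤ ·) F g := by
    obtain ⟨Kt, t, ht, hlip⟩ := hj x
    obtain ⟨r, hr, hball⟩ := Metric.mem_nhds_iff.1 ht
    refine ⟨Kt * |v|, ?_⟩
    rw [Filter.eventually_map]
    have h1 : Metric.ball x (r/2) ∈ nhds x := Metric.ball_mem_nhds _ (by linarith)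
    have h2 : Set.Ioo (0:ℝ) (r/(2*(|v|+1))) ∈ nhdsWithin 0 (Set.Ioi 0) :=
      Ioo_mem_nhdsGT_of_mem ⟨le_refl _, by positivity⟩
    filter_upwards [Filter.prod_mem_prod h1 h2] with p hp
    obtain ⟨hp1, hp2⟩ := hp
    have habs : |v| + 1 > 0 := by positivity
    have ht0 : 0 < p.2 := hp2.1
    have htv : p.2 * |v| < r/2 := by
      rcases hp2 with ⟨_, hlt⟩
      calc p.2 * |v| ≤ p.2 * (|v|+1) := by nlinarith
        _ < r/(2*(|v|+1)) * (|v|+1) := by nlinarith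
        _ = r/2 := by field_simp
    have hmem1 : p.1 ∈ t := by
      apply hball
      rw [Metric.mem_ball, Real.dist_eq]
      rw [Metric.mem_ball, Real.dist_eq] at hp1
      linarith
    have hmem2 : p.1 + p.2 * v ∈ t := by
      apply hball
      rw [Metric.mem_ball, Real.dist_eq]
      rw [Metric.mem_ball, Real.dist_eq] at hp1
      have : |p.1 + p.2 * v - x| ≤ |p.1 - x| + p.2 * |v| := by
        calc |p.1 + p.2 * v - x| = |(p.1 - x) + p.2 * v| := by ring_nf
          _ ≤ |p.1 - x| + |p.2 * v| := abs_add_le _ _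
          _ = |p.1 - x| + p.2 * |v| := by rw [abs_mul, abs_of_pos ht0]
      linarith
    have := hlip.dist_le_mul _ hmem2 _ hmem1
    rw [Real.dist_eq, Real.dist_eq] at this
    have hsimp : |p.1 + p.2 * v - p.1| = p.2 * |v| := by
      rw [add_sub_cancel_left, abs_mul, abs_of_pos ht0]
    rw [hsimp] at this
    have : j (p.1 + p.2 * v) - j p.1 ≤ Kt * (p.2 * |v|) := le_trans (le_abs_self _) this
    rw [hg]
    simp only
    rw [div_le_iff₀ ht0]
    calc j (p.1 + p.2 * v) - j p.1 ≤ Kt * (p.2 * |v|) := this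
      _ = Kt * |v| * p.2 := by ring
  set G : Filter (ℝ × ℝ) := (pure x : Filter ℝ) ×ˢ (nhdsWithin 0 (Set.Ioi 0)) with hG
  have hGF : G ≤ F := Filter.prod_mono (pure_le_nhds x) le_rfl
  have hGne : G.NeBot := Filter.prod_neBot.2 ⟨Filter.pure_neBot, inferInstance⟩
  have htend : Filter.Tendsto g G (nhds (deriv j x * v)) := by
    rw [hG, Filter.pure_prod, Filter.tendsto_map'_iff]
    rcases eq_or_ne v 0 with rfl | hv
    · have : (g ∘ fun t : ℝ => (x, t)) = fun _ => (0:ℝ) := by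
        funext t; simp [hg]
      rw [this, mul_zero]
      exact tendsto_const_nhds
    · have hslope : Filter.Tendsto (slope j x) (nhdsWithin x {x}ᶜ) (nhds (deriv j x)) :=
        hasDerivAt_iff_tendsto_slope.1 hx.hasDerivAt
      have hmap : Filter.Tendsto (fun t : ℝ => x + t * v) (nhdsWithin 0 (Set.Ioi 0))
          (nhdsWithin x {x}ᶜ) := by
        rw [tendsto_nhdsWithin_iff]
        constructor
        · have : Filter.Tendsto (fun t : ℝ => x + t * v) (nhds 0) (nhds (x + 0 * v)) := by
            exact (tendsto_const_nhds.add ((continuous_id.mul continuous_const).tendsto 0))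
          rw [zero_mul, add_zero] at this
          exact this.mono_left nhdsWithin_le_nhds
        · filter_upwards [self_mem_nhdsWithin] with t ht
          have : t * v ≠ 0 := mul_ne_zero (ne_of_gt ht) hv
          simp only [Set.mem_compl_iff, Set.mem_singleton_iff]
          intro h
          exact this (by linarith [h])
      have := hslope.comp hmap
      have hmul := this.const_mul v
      have heq : (fun t : ℝ => v * slope j x (x + t * v)) =ᶠ[nhdsWithin 0 (Set.Ioi 0)]
          (g ∘ fun t : ℝ => (x, t)) := by
        filter_upwards [self_mem_nhdsWithin] with t ht
        have ht0 : (t:ℝ) ≠ 0 := ne_of_gt ht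
        simp only [Function.comp, hg, slope_def_field]
        rw [add_sub_cancel_left]
        field_simp
      have := (Filter.Tendsto.congr' heq hmul)
      rw [mul_comm] at this
      exact this
  have h1 : deriv j x * v = Filter.limsup g G := (htend.limsup_eq).symm
  rw [clarkeDirDeriv, ← hF, ← hg, h1]
  exact Filter.limsup_le_limsup_of_le hGF htend.isCoboundedUnder_le hbdd

set_option maxHeartbeats 1000000 in

lemma my_pointwise {d₁ d₂ ε K δ ξ x s : ℝ} (hd₂ : 0 < d₂) (hε : 0 < ε) (hK0 : 0 ≤ K)
    (hξx : d₁ - d₂ * |x| ^ 2 ≤ ξ * x)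
    (hξK : |x| ≤ 1 → |ξ| ≤ K)
    (hδ0 : 0 < δ) (hδ1 : δ ≤ 1/2) (hδε : (2*δ + δ^2) * d₂ ≤ ε)
    (hs : |s| ≤ δ) :
    (-(2*K) - 2*|d₁| - 2*d₂) - (d₂ + ε) * |x + s| ^ 2 ≤ ξ * (x + s) := by
  have hsq : |x + s| ^ 2 = (x + s)^2 := sq_abs _
  have hsqx : |x| ^ 2 = x^2 := sq_abs _
  have hnn : 0 ≤ (d₂ + ε) * |x + s| ^ 2 := by positivity
  rcases le_or_gt |x| 1 with hx1 | hx1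
  · -- small x: |ξ| ≤ K
    have hξ := hξK hx1
    have : |ξ * (x + s)| ≤ K * (3/2) := by
      rw [abs_mul]
      have : |x + s| ≤ 3/2 := by
        calc |x + s| ≤ |x| + |s| := abs_add_le _ _
          _ ≤ 1 + 1/2 := by linarith
          _ = 3/2 := by norm_num
      nlinarith [abs_nonneg ξ, abs_nonneg (x+s)]
    have hlow : -(K * (3/2)) ≤ ξ * (x + s) := by
      have := neg_abs_le (ξ * (x + s)); linarith
    have : 0 ≤ |d₁| := abs_nonneg d₁
    linarith
  · -- |x| > 1
    have hx0 : x ≠ 0 := by intro h; rw [h] at hx1; simp at hx1; linarith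
    have hxabs : (1:ℝ) < |x| := hx1
    set c : ℝ := (x + s) / x with hc
    have hmul : ξ * (x + s) = (ξ * x) * c := by rw [hc]; field_simp
    have hcs : c = 1 + s / x := by rw [hc]; field_simp
    have hsx : |s / x| ≤ δ := by
      rw [abs_div]
      calc |s| / |x| ≤ |s| := div_le_self (abs_nonneg s) (le_of_lt hxabs)
        _ ≤ δ := hs
    have hclb : 1 - δ ≤ c := by
      rw [hcs]
      have := neg_abs_le (s / x); linarith
    have hcub : c ≤ 1 + δ := by
      rw [hcs]
      have := le_abs_self (s / x); linarith
    rcases le_or_gt 0 (ξ * x) with hsgn | hsgn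
    · have : 0 ≤ (ξ * x) * c := mul_nonneg hsgn (by linarith)
      rw [hmul]
      have : 0 ≤ |d₁| := abs_nonneg d₁
      linarith
    · -- ξ x < 0
      have h1 : (ξ * x) * c ≥ (ξ * x) * (1 + δ) := by nlinarith
      have h2 : (ξ * x) * (1 + δ) ≥ (d₁ - d₂ * x^2) * (1 + δ) := by
        rw [hsqx] at hξx; nlinarith
      have hxb : |x| ≤ |x + s| + δ := by
        have := abs_sub_abs_le_abs_sub x (x + s)
        have : |x - (x+s)| = |s| := by rw [show x - (x+s) = -s by ring, abs_neg]
        have h3 := abs_sub_abs_le_abs_sub x (x + s)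
        rw [this] at h3
        linarith
      have hx2 : x^2 ≤ (1+δ) * |x+s|^2 + δ + δ^2 := by
        have h4 : x^2 ≤ |x+s|^2 + 2*δ*|x+s| + δ^2 := by
          have h4a : |x|^2 ≤ (|x+s| + δ)^2 :=
            pow_le_pow_left₀ (abs_nonneg x) hxb 2
          rw [hsqx] at h4a
          have h4b : (|x+s| + δ)^2 = |x+s|^2 + 2*δ*|x+s| + δ^2 := by ring
          linarith
        have h5 : 2*δ*|x+s| ≤ δ*|x+s|^2 + δ := by
          have h6 : 0 ≤ δ * (|x+s| - 1)^2 := by positivity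
          have h7 : δ * (|x+s| - 1)^2 = δ*|x+s|^2 - 2*δ*|x+s| + δ := by ring
          linarith
        have h8 : δ * |x+s|^2 + |x+s|^2 = (1+δ) * |x+s|^2 := by ring
        linarith
      have key : -(2*K) - 2*|d₁| - 2*d₂ - (d₂ + ε) * |x + s| ^ 2
          ≤ (d₁ - d₂ * x^2) * (1 + δ) := by
        have e1 : (1+δ) * (d₂ * x^2) ≤ (1+δ) * (d₂ * ((1+δ) * |x+s|^2 + δ + δ^2)) := by
          have : 0 < 1 + δ := by linarith
          have := mul_le_mul_of_nonneg_left hx2 hd₂.le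
          nlinarith
        have e2 : (1+δ) * (d₂ * ((1+δ) * |x+s|^2 + δ + δ^2))
            = (1 + 2*δ + δ^2) * d₂ * |x+s|^2 + (1+δ)*(δ+δ^2)*d₂ := by ring
        have e3 : (1 + 2*δ + δ^2) * d₂ * |x+s|^2 ≤ (d₂ + ε) * |x+s|^2 := by
          have h7 : (1 + 2*δ + δ^2) * d₂ ≤ d₂ + ε := by nlinarith
          have h8 : (0:ℝ) ≤ |x+s|^2 := by positivity
          nlinarith
        have e4 : (1+δ)*(δ+δ^2)*d₂ ≤ 2*d₂ := by
          have hq1 : δ^2 ≤ δ := by nlinarith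
          have hq2 : δ^3 ≤ δ := by nlinarith [sq_nonneg δ]
          have hq : (1+δ)*(δ+δ^2) ≤ 2 := by nlinarith
          nlinarith
        have e5 : -2*|d₁| ≤ (1+δ)*d₁ := by
          have := neg_abs_le d₁
          have := abs_nonneg d₁
          nlinarith
        nlinarith
      rw [hmul]
      linarith

/-- dissipativity condition is essentially preserved under mollification. -/
theorem mollified_dissipativity
    (j ϱ : ℝ → ℝ) (hj : LocallyLipschitz j)
    (d₁ d₂ : ℝ) (hd₂ : 0 < d₂)
    (hdiss : ∀ u ξ : ℝ, ξ ∈ clarkeSubdiff j u → d₁ - d₂ * |u| ^ 2 ≤ ξ * u)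
    (hϱsmooth : ContDiff ℝ (⊤ : ℕ∞) ϱ) (hϱnonneg : ∀ s, 0 ≤ ϱ s)
    (hϱsupp : ∀ s, ϱ s ≠ 0 → s ∈ Set.Ioo (-1 : ℝ) 1)
    (hϱint : ∫ s, ϱ s = 1)
    (jn : ℕ → ℝ → ℝ)
    (hjn : ∀ n : ℕ, ∀ r : ℝ, jn n r = ∫ s, (n : ℝ) * ϱ ((n : ℝ) * s) * j (r - s)) :
    ∀ ε : ℝ, 0 < ε → ∃ N₀ : ℕ, ∃ d₁' : ℝ,
      ∀ n : ℕ, N₀ ≤ n → ∀ u : ℝ,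
        d₁' - (d₂ + ε) * |u| ^ 2 ≤ deriv (jn n) u * u := by
  intro ε hε
  have hδ0 : 0 < min (1/2) (ε/(3*d₂)) := lt_min (by norm_num) (by positivity)
  set δ : ℝ := min (1/2) (ε/(3*d₂)) with hδdef
  have hδ1 : δ ≤ 1/2 := min_le_left _ _
  have hδε : (2*δ + δ^2) * d₂ ≤ ε := by
    have h1 : δ ≤ ε/(3*d₂) := min_le_right _ _
    have h2 : δ^2 ≤ δ := by nlinarith
    have h3 : δ * (3*d₂) ≤ ε := (le_div_iff₀ (by positivity)).1 h1
    nlinarith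
  -- global bound near 0
  obtain ⟨K', hK'⟩ := my_compact_lip hj (isCompact_Icc (a := (-2:ℝ)) (b := 2))
  have hK0 : (0:ℝ) ≤ (K' : ℝ) := K'.coe_nonneg
  have hKb : ∀ x : ℝ, |x| ≤ 1 → DifferentiableAt ℝ j x → |deriv j x| ≤ (K' : ℝ) := by
    intro x hx hdiff
    obtain ⟨hx1, hx2⟩ := abs_le.1 hx
    refine my_deriv_bound hK' ?_ (one_pos) ?_ hdiff
    · exact ⟨by linarith, by linarith⟩
    · intro y hy
      rw [Metric.mem_ball, Real.dist_eq] at hy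
      obtain ⟨hy1, hy2⟩ := abs_lt.1 hy
      exact ⟨by linarith, by linarith⟩
  refine ⟨max 1 ⌈1/δ⌉₊, -(2*(K':ℝ)) - 2*|d₁| - 2*d₂, ?_⟩
  intro n hn u
  have hn1 : 1 ≤ n := le_trans (le_max_left _ _) hn
  have hc1 : (1:ℝ) ≤ (n:ℝ) := by exact_mod_cast hn1
  have hc0 : (0:ℝ) < (n:ℝ) := by linarith
  have hcδ : 1/(n:ℝ) ≤ δ := by
    have h1 : ((⌈1/δ⌉₊ : ℕ) : ℝ) ≤ (n:ℝ) := by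
      exact_mod_cast le_trans (le_max_right 1 ⌈1/δ⌉₊) hn
    have h2 : 1/δ ≤ (n:ℝ) := le_trans (Nat.le_ceil _) h1
    rw [div_le_iff₀ hc0]
    rw [div_le_iff₀ hδ0] at h2
    linarith [mul_comm δ (n:ℝ)]
  obtain ⟨g, hgdef⟩ : ∃ g : ℝ → ℝ, g = fun s => (n:ℝ) * ϱ ((n:ℝ) * s) := ⟨_, rfl⟩
  have hg0 : ∀ s, 0 ≤ g s := fun s => by rw [hgdef]; exact mul_nonneg hc0.le (hϱnonneg _)
  have hgsupp : ∀ s, g s ≠ 0 → |s| ≤ δ := by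
    intro s hs
    have hϱ0 : ϱ ((n:ℝ) * s) ≠ 0 := by
      intro h; apply hs; rw [hgdef]; simp [h]
    
    obtain ⟨h1, h2⟩ := hϱsupp _ hϱ0
    have : |(n:ℝ) * s| ≤ 1 := le_of_lt (abs_lt.2 ⟨h1, h2⟩)
    rw [abs_mul, abs_of_pos hc0] at this
    have : |s| ≤ 1/(n:ℝ) := by rw [le_div_iff₀ hc0]; linarith [mul_comm (n:ℝ) |s|]
    linarith
  have hgcont : Continuous g := by
    rw [hgdef]
    exact continuous_const.mul (hϱsmooth.continuous.comp (continuous_const.mul continuous_id))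
  have hgcs : HasCompactSupport g := by
    have hsub : Function.support g ⊆ Set.Icc (-δ) δ := by
      intro s hs
      exact abs_le.1 (hgsupp s hs)
    exact IsCompact.of_isClosed_subset isCompact_Icc (isClosed_tsupport g)
      (closure_minimal hsub isClosed_Icc)
  have hgint : Integrable g := hgcont.integrable_of_hasCompactSupport hgcs
  have hgone : ∫ s, g s = 1 := by
    rw [hgdef]
    simp only
    rw [MeasureTheory.integral_const_mul, MeasureTheory.Measure.integral_comp_mul_left ϱ (n:ℝ),
      smul_eq_mul, hϱint, abs_of_pos (inv_pos.2 hc0)]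
    field_simp
  -- Lipschitz constant around u
  obtain ⟨Ku, hKu⟩ := my_compact_lip hj (isCompact_Icc (a := u-2) (b := u+2))
  -- a.e. differentiability shifted
  have hae : ∀ᵐ s : ℝ, DifferentiableAt ℝ j (u - s) :=
    ((MeasureTheory.Measure.measurePreserving_sub_left volume u).quasiMeasurePreserving.tendsto_ae).eventually
      (my_ae_diff hj)
  -- differentiation under the integral sign
  have hder := hasDerivAt_integral_of_dominated_loc_of_lip
    (F := fun r s => g s * j (r - s)) (F' := fun s => g s * deriv j (u - s))
    (x₀ := u) (bound := fun s => g s * (Ku : ℝ)) (μ := volume) (s := Metric.ball u 1) (Metric.ball_mem_nhds u one_pos)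
    ?_ ?_ ?_ ?_ ?_ ?_
  case refine_1 =>
    refine Filter.Eventually.of_forall fun r => Continuous.aestronglyMeasurable ?_
    exact hgcont.mul (hj.continuous.comp (continuous_const.sub continuous_id))
  case refine_2 =>
    apply Continuous.integrable_of_hasCompactSupport
    · exact hgcont.mul (hj.continuous.comp (continuous_const.sub continuous_id))
    · exact hgcs.mul_right
  case refine_3 =>
    exact (hgcont.aestronglyMeasurable).mul
      (((measurable_deriv j).comp (measurable_const.sub measurable_id)).aestronglyMeasurable)
  case refine_4 =>
    refine Filter.Eventually.of_forall fun s => ?_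
    rw [lipschitzOnWith_iff_dist_le_mul]
    intro r hr r' hr'
    have hb : ((Real.nnabs (g s * (Ku:ℝ)) : NNReal) : ℝ) = g s * (Ku:ℝ) := by
      rw [Real.coe_nnabs, abs_of_nonneg (mul_nonneg (hg0 s) Ku.coe_nonneg)]
    rw [Real.dist_eq, Real.dist_eq, ← mul_sub, abs_mul, abs_of_nonneg (hg0 s), hb]
    rcases eq_or_ne (g s) 0 with h0 | h0
    · rw [h0]; simp
    · have hsδ : |s| ≤ δ := hgsupp s h0
      rw [Metric.mem_ball, Real.dist_eq] at hr hr'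
      have hδle : δ ≤ 1 := by linarith
      have hmem1 : r - s ∈ Set.Icc (u-2) (u+2) := by
        obtain ⟨h1, h2⟩ := abs_lt.1 hr
        obtain ⟨h3, h4⟩ := abs_le.1 hsδ
        exact ⟨by linarith, by linarith⟩
      have hmem2 : r' - s ∈ Set.Icc (u-2) (u+2) := by
        obtain ⟨h1, h2⟩ := abs_lt.1 hr'
        obtain ⟨h3, h4⟩ := abs_le.1 hsδ
        exact ⟨by linarith, by linarith⟩
      have := hKu.dist_le_mul _ hmem1 _ hmem2
      rw [Real.dist_eq, Real.dist_eq] at this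
      have heq : r - s - (r' - s) = r - r' := by ring
      rw [heq] at this
      have := mul_le_mul_of_nonneg_left this (hg0 s)
      calc g s * |j (r - s) - j (r' - s)| ≤ g s * ((Ku:ℝ) * |r - r'|) := this
        _ = g s * (Ku:ℝ) * |r - r'| := by ring
  case refine_5 => exact hgint.mul_const _
  case refine_6 =>
    filter_upwards [hae] with s hs
    have h1 : HasDerivAt (fun r => j (r - s)) (deriv j (u - s)) u := by
      have := HasDerivAt.comp u hs.hasDerivAt ((hasDerivAt_id u).sub_const s)
      simpa [Function.comp_def] using this
    exact h1.const_mul (g s)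
  obtain ⟨hF'int, hderiv⟩ := hder
  have hjneq : jn n = fun r => ∫ s, g s * j (r - s) := by
    funext r
    rw [hjn n r, hgdef]
  have hD : deriv (jn n) u = ∫ s, g s * deriv j (u - s) := by
    rw [hjneq]
    exact hderiv.deriv
  rw [hD, ← MeasureTheory.integral_mul_const]
  calc -(2*(K':ℝ)) - 2*|d₁| - 2*d₂ - (d₂ + ε) * |u| ^ 2
      = (∫ s, g s) * (-(2*(K':ℝ)) - 2*|d₁| - 2*d₂ - (d₂ + ε) * |u| ^ 2) := by
        rw [hgone, one_mul]
    _ = ∫ s, g s * (-(2*(K':ℝ)) - 2*|d₁| - 2*d₂ - (d₂ + ε) * |u| ^ 2) :=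
        (MeasureTheory.integral_mul_const _ _).symm
    _ ≤ ∫ s, g s * deriv j (u - s) * u := by
        refine integral_mono_ae (hgint.mul_const _) (hF'int.mul_const u) ?_
        filter_upwards [hae] with s hsdiff
        rcases eq_or_ne (g s) 0 with h0 | h0
        · simp [h0]
        · have hsδ : |s| ≤ δ := hgsupp s h0
          have hclarke := my_deriv_mem hj hsdiff
          have hξx := hdiss (u - s) _ hclarke
          have key := my_pointwise hd₂ hε hK0 hξx
            (fun h => hKb (u - s) h hsdiff) hδ0 hδ1 hδε hsδ
          rw [sub_add_cancel] at key
          rw [mul_assoc]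
          exact mul_le_mul_of_nonneg_left key (hg0 s)
end

section
/- Let (Γ, σ) be a finite measure space and j : ℝ → ℝ locally Lipschitz with Clarke subdifferential satisfying the growth condition |ξ| ≤ c₁ + c₂|u| for all ξ ∈ ∂j(u), with c₁, c₂ > 0. For u ∈ L²(Γ) define S(u) = {ξ ∈ L²(Γ) : ξ(x) ∈ ∂j(u(x)) for a.e. x}. Then for every u ∈ L²(Γ), the set S(u) is nonempty, bounded, closed and convex in L²(Γ), and every ξ ∈ S(u) satisfies ‖ξ‖²_{L²} ≤ 2c₁²σ(Γ) + 2c₂²‖u‖²_{L²}. -/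
open MeasureTheory Filter Set

/-!
Along `𝓝 s ×ˢ 𝓝[>] 0` the difference quotients of a locally Lipschitz `j` stay bounded, so
`v ↦ clarkeDirDeriv j s v` is a real-valued sublinear function; hence `clarkeDirDeriv j s 1`
lies in `clarkeSubdiff j s`. Since `s ↦ clarkeDirDeriv j s 1` is upper semicontinuous, it is
Borel, and composing it with `u` gives an element of `S u`, square integrable by the growth
condition. Closedness of `S u` comes from an a.e. convergent subsequence of an `L²`-convergent
sequence, convexity is pointwise, and the norm bound integrates `ξ² ≤ 2 c₁² + 2 c₂² u²`.
-/

open Topology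

lemma Filter.limsup_const_mul_of_pos {α : Type*} {l : Filter α} [l.NeBot] {F : α → ℝ}
    (hF : IsBoundedUnder (· ≤ ·) l fun x => |F x|) {c : ℝ} (hc : 0 < c) :
    limsup (fun x => c * F x) l = c * limsup F l := by
  have hcF : IsBoundedUnder (· ≤ ·) l fun x => |c * F x| := by
    simp only [abs_mul, abs_of_pos hc]
    exact (monotone_mul_left_of_nonneg hc.le).isBoundedUnder_le_comp hF
  obtain ⟨hF_le, hF_ge⟩ := isBoundedUnder_le_abs.1 hF
  obtain ⟨hcF_le, hcF_ge⟩ := isBoundedUnder_le_abs.1 hcF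
  exact ((OrderIso.mulLeft₀ c hc).limsup_apply hF_le hF_ge.isCoboundedUnder_le hcF_le
    hcF_ge.isCoboundedUnder_le).symm

namespace MeasureTheory

variable {α E : Type*} [MeasurableSpace α] {μ : Measure α}

lemma Lp.isClosed_setOf_ae_mem [NormedAddCommGroup E] {p : ENNReal} [Fact (1 ≤ p)]
    {C : α → Set E} (hC : ∀ x, IsClosed (C x)) :
    IsClosed {f : Lp E p μ | ∀ᵐ x ∂μ, f x ∈ C x} := by
  refine IsSeqClosed.isClosed fun f g hf hfg => ?_
  obtain ⟨ns, -, hns⟩ := (tendstoInMeasure_of_tendsto_Lp hfg).exists_seq_tendsto_ae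
  filter_upwards [hns, ae_all_iff.2 fun i => hf (ns i)] with x hx hxC
  exact (hC x).mem_of_tendsto hx (Eventually.of_forall hxC)

lemma Lp.convex_setOf_ae_mem [NormedAddCommGroup E] [NormedSpace ℝ E] {p : ENNReal}
    {C : α → Set E} (hC : ∀ x, Convex ℝ (C x)) :
    Convex ℝ {f : Lp E p μ | ∀ᵐ x ∂μ, f x ∈ C x} := by
  intro f hf g hg a b ha hb hab
  filter_upwards [hf, hg, Lp.coeFn_add (a • f) (b • g), Lp.coeFn_smul a f, Lp.coeFn_smul b g]
    with x hfx hgx hadd hsmul_f hsmul_g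
  rw [hadd, Pi.add_apply, hsmul_f, hsmul_g]
  exact hC x hfx hgx ha hb hab

lemma MemLp.comp_of_abs_le_add_mul [IsFiniteMeasure μ] {p : ENNReal} {u : α → ℝ}
    (hu : MemLp u p μ) {g : ℝ → ℝ} (hg : Measurable g) {a b : ℝ}
    (hgrowth : ∀ s, |g s| ≤ a + b * |s|) : MemLp (fun x => g (u x)) p μ :=
  ((memLp_const a).add (hu.norm.const_mul b)).of_le
    (hg.comp_aemeasurable hu.aestronglyMeasurable.aemeasurable).aestronglyMeasurable
    (Eventually.of_forall fun x => (hgrowth (u x)).trans (le_abs_self _))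

lemma L2.norm_sq_eq_integral_sq (f : Lp ℝ 2 μ) : ‖f‖ ^ 2 = ∫ x, f x ^ 2 ∂μ := by
  rw [← real_inner_self_eq_norm_sq, L2.inner_def]
  simp [sq]

lemma L2.norm_sq_le_of_ae_abs_le [IsFiniteMeasure μ] {ξ u : Lp ℝ 2 μ} {c₁ c₂ : ℝ}
    (h : ∀ᵐ x ∂μ, |ξ x| ≤ c₁ + c₂ * |u x|) :
    ‖ξ‖ ^ 2 ≤ 2 * c₁ ^ 2 * (μ univ).toReal + 2 * c₂ ^ 2 * ‖u‖ ^ 2 := by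
  have hu2 : Integrable (fun x => 2 * c₂ ^ 2 * u x ^ 2) μ := (Lp.memLp u).integrable_sq.const_mul _
  have hpt : ∀ᵐ x ∂μ, ξ x ^ 2 ≤ 2 * c₂ ^ 2 * u x ^ 2 + 2 * c₁ ^ 2 := by
    filter_upwards [h] with x hx
    nlinarith [abs_nonneg (ξ x), sq_abs (ξ x), sq_abs (u x), sq_nonneg (c₁ - c₂ * |u x|)]
  calc ‖ξ‖ ^ 2 = ∫ x, ξ x ^ 2 ∂μ := L2.norm_sq_eq_integral_sq ξ
    _ ≤ ∫ x, (2 * c₂ ^ 2 * u x ^ 2 + 2 * c₁ ^ 2) ∂μ :=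
        integral_mono_ae (Lp.memLp ξ).integrable_sq (hu2.add (integrable_const _)) hpt
    _ = 2 * c₁ ^ 2 * (μ univ).toReal + 2 * c₂ ^ 2 * ‖u‖ ^ 2 := by
        rw [integral_add hu2 (integrable_const _), integral_const, integral_const_mul,
          L2.norm_sq_eq_integral_sq u, smul_eq_mul, measureReal_def]
        ring

end MeasureTheory

noncomputable def clarkeQuotient (j : ℝ → ℝ) (v : ℝ) (p : ℝ × ℝ) : ℝ :=
  (j (p.1 + p.2 * v) - j p.1) / p.2

lemma clarkeDirDeriv_eq_limsup (j : ℝ → ℝ) (s v : ℝ) :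
    clarkeDirDeriv j s v = limsup (clarkeQuotient j v) (𝓝 s ×ˢ 𝓝[>] 0) := rfl

lemma clarkeDirDeriv_zero (j : ℝ → ℝ) (s : ℝ) : clarkeDirDeriv j s 0 = 0 := by
  simp [clarkeDirDeriv]

lemma eventually_pos_snd {α : Type*} (l : Filter α) : ∀ᶠ p : α × ℝ in l ×ˢ 𝓝[>] 0, 0 < p.2 :=
  tendsto_snd.eventually self_mem_nhdsWithin

lemma tendsto_add_snd_mul (s v : ℝ) :
    Tendsto (fun p : ℝ × ℝ => p.1 + p.2 * v) (𝓝 s ×ˢ 𝓝[>] 0) (𝓝 s) := by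
  simpa using (tendsto_fst (f := 𝓝 s) (g := 𝓝[>] (0 : ℝ))).add
    ((tendsto_snd.mono_right nhdsWithin_le_nhds).mul_const v)

lemma isClosed_clarkeSubdiff (j : ℝ → ℝ) (s : ℝ) : IsClosed (clarkeSubdiff j s) := by
  simp only [clarkeSubdiff, ofPred_forall]
  exact isClosed_iInter fun v => isClosed_le (continuous_id.mul continuous_const) continuous_const

lemma convex_clarkeSubdiff (j : ℝ → ℝ) (s : ℝ) : Convex ℝ (clarkeSubdiff j s) := by
  simp only [clarkeSubdiff, ofPred_forall]
  exact convex_iInter fun v => convex_halfSpace_le (LinearMap.mulRight ℝ v).isLinear _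

namespace LocallyLipschitz

variable {j : ℝ → ℝ}

lemma isBoundedUnder_abs_clarkeQuotient (hj : LocallyLipschitz j) (s v : ℝ) :
    IsBoundedUnder (· ≤ ·) (𝓝 s ×ˢ 𝓝[>] 0) fun p => |clarkeQuotient j v p| := by
  obtain ⟨K, t, ht, hK⟩ := hj s
  refine ⟨K * |v|, eventually_map.2 ?_⟩
  filter_upwards [tendsto_fst.eventually_mem ht, (tendsto_add_snd_mul s v).eventually_mem ht,
    eventually_pos_snd (𝓝 s)] with p hp hpv hp2
  have hlip := hK.dist_le_mul _ hpv _ hp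
  rw [Real.dist_eq, Real.dist_eq, add_sub_cancel_left, abs_mul, abs_of_pos hp2] at hlip
  rw [clarkeQuotient, abs_div, abs_of_pos hp2, div_le_iff₀ hp2]
  linarith

lemma isBoundedUnder_le_clarkeQuotient (hj : LocallyLipschitz j) (s v : ℝ) :
    IsBoundedUnder (· ≤ ·) (𝓝 s ×ˢ 𝓝[>] 0) (clarkeQuotient j v) :=
  (isBoundedUnder_le_abs.1 (hj.isBoundedUnder_abs_clarkeQuotient s v)).1

lemma isCoboundedUnder_le_clarkeQuotient (hj : LocallyLipschitz j) (s v : ℝ) :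
    IsCoboundedUnder (· ≤ ·) (𝓝 s ×ˢ 𝓝[>] 0) (clarkeQuotient j v) :=
  (isBoundedUnder_le_abs.1 (hj.isBoundedUnder_abs_clarkeQuotient s v)).2.isCoboundedUnder_le

lemma clarkeDirDeriv_mul_of_pos (hj : LocallyLipschitz j) (s v : ℝ) {c : ℝ} (hc : 0 < c) :
    clarkeDirDeriv j s (c * v) = c * clarkeDirDeriv j s v := by
  set m : ℝ × ℝ → ℝ × ℝ := Prod.map id (c * ·)
  have hmul : map (c * ·) (𝓝[>] (0 : ℝ)) = 𝓝[>] 0 := by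
    nth_rw 1 [← comap_mulLeft_nhdsGT_zero hc]
    exact map_comap_of_surjective (mul_left_surjective₀ hc.ne') _
  have hm : map m (𝓝 s ×ˢ 𝓝[>] 0) = 𝓝 s ×ˢ 𝓝[>] 0 := by
    rw [← prod_map_map_eq', map_id, hmul]
  have hbdd : IsBoundedUnder (· ≤ ·) (𝓝 s ×ˢ 𝓝[>] 0) fun p => |clarkeQuotient j v (m p)| := by
    have := hj.isBoundedUnder_abs_clarkeQuotient s v
    rw [← hm] at this
    exact this
  -- the quotient for `c * v` at `(y, t)` is `c` times the quotient for `v` at `(y, c * t)`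
  calc clarkeDirDeriv j s (c * v)
      = limsup (fun p => c * clarkeQuotient j v (m p)) (𝓝 s ×ˢ 𝓝[>] 0) := by
        refine limsup_congr ((eventually_pos_snd (𝓝 s)).mono fun p hp => ?_)
        simp only [clarkeQuotient, m, Prod.map_fst, Prod.map_snd, id]
        field_simp
    _ = c * limsup (clarkeQuotient j v ∘ m) (𝓝 s ×ˢ 𝓝[>] 0) := limsup_const_mul_of_pos hbdd hc
    _ = c * clarkeDirDeriv j s v := by rw [limsup_comp, hm, clarkeDirDeriv_eq_limsup]

lemma clarkeDirDeriv_add_le (hj : LocallyLipschitz j) (s v w : ℝ) :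
    clarkeDirDeriv j s (v + w) ≤ clarkeDirDeriv j s v + clarkeDirDeriv j s w := by
  set m : ℝ × ℝ → ℝ × ℝ := fun p => (p.1 + p.2 * v, p.2)
  have hm : Tendsto m (𝓝 s ×ˢ 𝓝[>] 0) (𝓝 s ×ˢ 𝓝[>] 0) :=
    (tendsto_add_snd_mul s v).prodMk tendsto_snd
  obtain ⟨hw_le, hw_ge⟩ := isBoundedUnder_le_abs.1 <|
    (hj.isBoundedUnder_abs_clarkeQuotient s w).mono (map_mono hm)
  -- split the step from `y` to `y + t * (v + w)` at `y + t * v`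
  calc clarkeDirDeriv j s (v + w)
      = limsup (clarkeQuotient j w ∘ m + clarkeQuotient j v) (𝓝 s ×ˢ 𝓝[>] 0) := by
        rw [clarkeDirDeriv_eq_limsup]
        congr 1
        funext p
        simp only [clarkeQuotient, m, Function.comp, Pi.add_apply, mul_add, ← add_assoc]
        ring
    _ ≤ limsup (clarkeQuotient j w ∘ m) (𝓝 s ×ˢ 𝓝[>] 0) + clarkeDirDeriv j s v :=
        limsup_add_le hw_ge hw_le (hj.isCoboundedUnder_le_clarkeQuotient s v)
          (hj.isBoundedUnder_le_clarkeQuotient s v)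
    _ ≤ clarkeDirDeriv j s w + clarkeDirDeriv j s v :=
        add_le_add_left (hm.limsup_comp_le_limsup hw_ge.isCoboundedUnder_le
          (hj.isBoundedUnder_le_clarkeQuotient s w)) _
    _ = clarkeDirDeriv j s v + clarkeDirDeriv j s w := add_comm _ _

lemma clarkeDirDeriv_one_mem_clarkeSubdiff (hj : LocallyLipschitz j) (s : ℝ) :
    clarkeDirDeriv j s 1 ∈ clarkeSubdiff j s := by
  intro v
  rcases lt_trichotomy v 0 with hv | rfl | hv
  · have hsub := hj.clarkeDirDeriv_add_le s v (-v)
    have hneg := hj.clarkeDirDeriv_mul_of_pos s 1 (neg_pos.2 hv)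
    rw [add_neg_cancel, clarkeDirDeriv_zero] at hsub
    rw [mul_one] at hneg
    linarith
  · rw [clarkeDirDeriv_zero, mul_zero]
  · have hpos := hj.clarkeDirDeriv_mul_of_pos s 1 hv
    rw [mul_one] at hpos
    rw [hpos, mul_comm]

lemma upperSemicontinuous_clarkeDirDeriv (hj : LocallyLipschitz j) (v : ℝ) :
    UpperSemicontinuous fun s => clarkeDirDeriv j s v := by
  intro s y hy
  obtain ⟨y', hsy', hy'y⟩ := exists_between hy
  obtain ⟨U, hU, T, hT, hUT⟩ := eventually_prod_iff.1 <|
    eventually_lt_of_limsup_lt hsy' (hj.isBoundedUnder_le_clarkeQuotient s v)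
  filter_upwards [eventually_eventually_nhds.2 hU] with s' hs'
  refine (limsup_le_of_le (hj.isCoboundedUnder_le_clarkeQuotient s' v) ?_).trans_lt hy'y
  filter_upwards [hs'.prod_mk hT] with p hp using (hUT hp.1 hp.2).le

lemma exists_Lp_ae_mem_clarkeSubdiff {α : Type*} [MeasurableSpace α]
    {μ : Measure α} [IsFiniteMeasure μ] {p : ENNReal} (hj : LocallyLipschitz j)
    {c₁ c₂ : ℝ} (hgrowth : ∀ s ξ : ℝ, ξ ∈ clarkeSubdiff j s → |ξ| ≤ c₁ + c₂ * |s|)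
    (u : Lp ℝ p μ) : ∃ ξ : Lp ℝ p μ, ∀ᵐ x ∂μ, ξ x ∈ clarkeSubdiff j (u x) := by
  have hsel := hj.clarkeDirDeriv_one_mem_clarkeSubdiff
  have hmem : MemLp (fun x => clarkeDirDeriv j (u x) 1) p μ :=
    (Lp.memLp u).comp_of_abs_le_add_mul (hj.upperSemicontinuous_clarkeDirDeriv 1).measurable
      fun s => hgrowth s _ (hsel s)
  exact ⟨hmem.toLp _, hmem.coeFn_toLp.mono fun x hx => hx ▸ hsel (u x)⟩

end LocallyLipschitz

theorem selection_set_properties_general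
    {Γ : Type*} [MeasurableSpace Γ] (σ : Measure Γ) [IsFiniteMeasure σ]
    (j : ℝ → ℝ) (hj : LocallyLipschitz j)
    (c₁ c₂ : ℝ)
    (hgrowth : ∀ u ξ : ℝ, ξ ∈ clarkeSubdiff j u → |ξ| ≤ c₁ + c₂ * |u|)
    (S : Lp ℝ 2 σ → Set (Lp ℝ 2 σ))
    (hS : ∀ u : Lp ℝ 2 σ, S u = {ξ : Lp ℝ 2 σ | ∀ᵐ x ∂σ, ξ x ∈ clarkeSubdiff j (u x)}) :
    ∀ u : Lp ℝ 2 σ,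
      (S u).Nonempty ∧ Bornology.IsBounded (S u) ∧ IsClosed (S u) ∧ Convex ℝ (S u) ∧
      ∀ ξ ∈ S u, ‖ξ‖ ^ 2 ≤ 2 * c₁ ^ 2 * (σ Set.univ).toReal + 2 * c₂ ^ 2 * ‖u‖ ^ 2 := by
  intro u
  have hbound : ∀ ξ ∈ S u,
      ‖ξ‖ ^ 2 ≤ 2 * c₁ ^ 2 * (σ Set.univ).toReal + 2 * c₂ ^ 2 * ‖u‖ ^ 2 := fun ξ hξ => by
    rw [hS u, mem_ofPred_eq] at hξ
    exact L2.norm_sq_le_of_ae_abs_le (hξ.mono fun x hx => hgrowth _ _ hx)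
  refine ⟨?_, isBounded_iff_forall_norm_le.2 ⟨_, fun ξ hξ => Real.le_sqrt_of_sq_le (hbound ξ hξ)⟩,
    ?_, ?_, hbound⟩ <;> rw [hS u]
  · exact hj.exists_Lp_ae_mem_clarkeSubdiff hgrowth u
  · exact Lp.isClosed_setOf_ae_mem fun x => isClosed_clarkeSubdiff j (u x)
  · exact Lp.convex_setOf_ae_mem fun x => convex_clarkeSubdiff j (u x)

/-- the set of `L²` selections of the Clarke subdifferential is nonempty,
bounded, closed and convex, with an explicit bound. -/
theorem selection_set_properties
    {Γ : Type*} [MeasurableSpace Γ] (σ : Measure Γ) [IsFiniteMeasure σ]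
    (j : ℝ → ℝ) (hj : LocallyLipschitz j)
    (c₁ c₂ : ℝ) (hc₁ : 0 < c₁) (hc₂ : 0 < c₂)
    (hgrowth : ∀ u ξ : ℝ, ξ ∈ clarkeSubdiff j u → |ξ| ≤ c₁ + c₂ * |u|)
    (S : Lp ℝ 2 σ → Set (Lp ℝ 2 σ))
    (hS : ∀ u : Lp ℝ 2 σ, S u = {ξ : Lp ℝ 2 σ | ∀ᵐ x ∂σ, ξ x ∈ clarkeSubdiff j (u x)}) :
    ∀ u : Lp ℝ 2 σ,
      (S u).Nonempty ∧ Bornology.IsBounded (S u) ∧ IsClosed (S u) ∧ Convex ℝ (S u) ∧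
      ∀ ξ ∈ S u, ‖ξ‖ ^ 2 ≤ 2 * c₁ ^ 2 * (σ Set.univ).toReal + 2 * c₂ ^ 2 * ‖u‖ ^ 2 :=
  selection_set_properties_general σ j hj c₁ c₂ hgrowth S hS
end
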